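/- For any ε > 0 and any integer n > 1, consider the n × (n+1) game with rows R = {1,…,n}, columns C = {1,…,n+1}, u₁(i,j) = iε/n for j ≤ n, u₁(i,n+1) = 1 − (n−i)ε/n, u₂(i,j) = (1+1/n)/2 for i ≠ j ≤ n, u₂(i,i) = 0 for i ≤ n, and u₂(i,n+1) = 1/2 for all i. If all rows are distinguishable (singleton SISes), then the profile where the row player plays uniformly over R and the column player plays column n+1 has no undetectable beneficial deviations and gives the row player utility strictly greater than 1 − ε. -/
import Mathlib


open Finset

lemma gaussR (n : ℕ) : ∑ i ∈ Finset.range n, (i:ℝ) = n*(n-1)/2 := by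
  induction n with
  | zero => simp
  | succ m ih => rw [Finset.sum_range_succ, ih]; push_cast; ring

/-- Row payoffs of the game of Proposition `closetofull`:
u₁(i,j) = iε/n for j ≤ n, u₁(i,n+1) = 1 − (n−i)ε/n (rows indexed 1..n). -/
noncomputable def gU1 (n : ℕ) (ε : ℝ) : Fin n → Fin (n+1) → ℝ := fun i j =>
  if (j : ℕ) < n then ((i : ℕ) + 1) * ε / n
  else 1 - ((n : ℝ) - ((i : ℕ) + 1)) * ε / n

/-- Column payoffs: u₂(i,j) = (1+1/n)/2 for i ≠ j ≤ n, u₂(i,i) = 0,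
u₂(i,n+1) = 1/2. -/
noncomputable def gU2 (n : ℕ) : Fin n → Fin (n+1) → ℝ := fun i j =>
  if (j : ℕ) < n then (if (j : ℕ) = (i : ℕ) then 0 else (1 + 1/(n : ℝ)) / 2)
  else 1/2

/-- with all rows distinguishable (singleton SISes), the profile
(uniform row strategy, pure column n+1) has no undetectable beneficial
deviations and gives the row player utility strictly greater than 1 − ε. -/
theorem close_to_full_commitment (n : ℕ) (hn : 1 < n) (ε : ℝ) (hε : 0 < ε) :
    let σ1 : Fin n → ℝ := fun _ => 1 / n
    let σ2 : Fin (n+1) → ℝ := fun j => if (j : ℕ) = n then 1 else 0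
    ((∀ c, 0 < σ2 c → ∀ c',
        ∑ r, σ1 r * gU2 n r c' ≤ ∑ r, σ1 r * gU2 n r c) ∧
     (∀ r, 0 < σ1 r → ∀ r' : Fin n, r' = r →
        ∑ c, σ2 c * gU1 n ε r' c ≤ ∑ c, σ2 c * gU1 n ε r c)) ∧
    1 - ε < ∑ r, ∑ c, σ1 r * σ2 c * gU1 n ε r c := by
  intro σ1 σ2
  have hn0 : (0:ℝ) < n := by exact_mod_cast Nat.zero_lt_of_lt hn
  have hn0' : (n:ℝ) ≠ 0 := ne_of_gt hn0
  have half : ∑ _r : Fin n, (1/(n:ℝ)) * (1/2) = 1/2 := by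
    rw [Finset.sum_const, Finset.card_univ, Fintype.card_fin, nsmul_eq_mul]
    field_simp
  refine ⟨⟨?_, ?_⟩, ?_⟩
  · intro c hc c'
    have hcn : (c : ℕ) = n := by
      by_contra h; simp only [σ2, if_neg h] at hc; exact lt_irrefl 0 hc
    have hRHS : ∑ r, σ1 r * gU2 n r c = 1/2 := by
      have : ∀ r : Fin n, σ1 r * gU2 n r c = (1/n) * (1/2) := by
        intro r
        simp [σ1, gU2, hcn]
      rw [Finset.sum_congr rfl (fun r _ => this r), half]
    rw [hRHS]
    by_cases h : (c' : ℕ) < n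
    · set K : ℝ := (1 + 1/(n:ℝ)) / 2 with hK
      set r0 : Fin n := ⟨c', h⟩ with hr0
      have : ∀ r : Fin n, σ1 r * gU2 n r c' =
          (1/n) * K - (if r = r0 then (1/n) * K else 0) := by
        intro r
        by_cases he : r = r0
        · subst he
          simp [σ1, gU2, h, hr0]
        · have : (c' : ℕ) ≠ (r : ℕ) := by
            intro hh
            apply he
            apply Fin.ext
            simp [hr0, hh]
          simp [σ1, gU2, h, this, he, hK]
      rw [Finset.sum_congr rfl (fun r _ => this r), Finset.sum_sub_distrib,
        Finset.sum_ite_eq' univ r0, if_pos (Finset.mem_univ r0),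
        Finset.sum_const, Finset.card_univ, Fintype.card_fin]
      have hn1 : (1:ℝ) ≤ n := by exact_mod_cast Nat.one_le_of_lt hn
      rw [nsmul_eq_mul]
      have : (n:ℝ) * (1/n * K) - 1/n * K = K * (1 - 1/n) := by
        field_simp
      rw [this, hK]
      rw [div_mul_eq_mul_div]
      rw [div_le_iff₀ (by norm_num : (0:ℝ) < 2)]
      have h1 : (1 + 1/(n:ℝ)) * (1 - 1/n) = 1 - 1/n^2 := by
        field_simp; ring
      rw [h1]
      have : 0 < 1/(n:ℝ)^2 := by positivity
      linarith
    · have : ∀ r : Fin n, σ1 r * gU2 n r c' = (1/n) * (1/2) := by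
        intro r; simp [σ1, gU2, h]
      rw [Finset.sum_congr rfl (fun r _ => this r), half]
  · intro r _ r' hr'
    rw [hr']
  · have hsum : ∀ r : Fin n, ∑ c, σ1 r * σ2 c * gU1 n ε r c =
        (1/n) * (1 - ((n:ℝ) - ((r:ℕ)+1)) * ε / n) := by
      intro r
      have : ∀ c : Fin (n+1), σ1 r * σ2 c * gU1 n ε r c =
          if c = Fin.last n then (1/n) * (1 - ((n:ℝ) - ((r:ℕ)+1)) * ε / n) else 0 := by
        intro c
        by_cases hc : c = Fin.last n
        · subst hc
          simp [σ1, σ2, gU1]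
        · have h1 : (c:ℕ) ≠ n := by
            intro hh; apply hc; apply Fin.ext; simpa using hh
          simp [σ2, h1, hc]
      rw [Finset.sum_congr rfl (fun c _ => this c), Finset.sum_ite_eq' univ,
        if_pos (Finset.mem_univ _)]
    rw [Finset.sum_congr rfl (fun r _ => hsum r)]
    have key : ∑ r : Fin n, (1/(n:ℝ)) * (1 - ((n:ℝ) - ((r:ℕ)+1)) * ε / n) =
        1 - ε * (n - 1) / (2 * n) := by
      have h1 : ∑ r : Fin n, ((r:ℕ) : ℝ) = (n:ℝ) * (n - 1) / 2 := by
        rw [Fin.sum_univ_eq_sum_range, gaussR]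
      have expand : ∀ r : Fin n, (1/(n:ℝ)) * (1 - ((n:ℝ) - ((r:ℕ)+1)) * ε / n)
          = (1/n - ((n:ℝ)-1) * ε / n^2) + ((r:ℕ):ℝ) * (ε / n^2) := by
        intro r; field_simp; ring
      rw [Finset.sum_congr rfl (fun r _ => expand r), Finset.sum_add_distrib,
        Finset.sum_const, Finset.card_univ, Fintype.card_fin, ← Finset.sum_mul, h1,
        nsmul_eq_mul]
      field_simp
      ring
    rw [key]
    have h2 : ε * ((n:ℝ) - 1) / (2 * n) < ε := by
      rw [div_lt_iff₀ (by positivity)]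
      have : (n:ℝ) - 1 < 2 * n := by linarith
      nlinarith
    linarith
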